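/- arXiv:math/0507336 — 4 statements merged into one kernel-verified Lean document; each statement's English description precedes it below -/
import Mathlib

section
/- Let n be a positive integer and let π be a noncrossing partition of {1,...,2n} in which every block has even cardinality. If no block of π has an even minimum, then for every even k in {1,...,2n}, the elements k-1 and k lie in the same block of π. -/
/- Partitions of {1,…,n} encoded as finite sets of blocks. -/

/-- `π` is a partition of `{1,…,n}`: blocks are nonempty subsets of `Finset.Icc 1 n`
and every element of `{1,…,n}` lies in exactly one block. -/
def IsPartitionOn (n : ℕ) (π : Finset (Finset ℕ)) : Prop :=
  (∀ B ∈ π, B.Nonempty) ∧ (∀ B ∈ π, B ⊆ Finset.Icc 1 n) ∧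
    ∀ i ∈ Finset.Icc 1 n, ∃! B, B ∈ π ∧ i ∈ B

/-- `π` is noncrossing: there are no `a < b < c < d` with `a, c` in a block `B` and
`b, d` in a different block `B'`. -/
def IsNoncrossing (π : Finset (Finset ℕ)) : Prop :=
  ∀ B ∈ π, ∀ B' ∈ π, ∀ a ∈ B, ∀ c ∈ B, ∀ b ∈ B', ∀ d ∈ B',
    a < b → b < c → c < d → B = B'

/-- The minimum of a block (junk value `0` for the empty block). -/
def blockMin (B : Finset ℕ) : ℕ := WithTop.untopD 0 B.min

/-- `π ∈ NC'(n)`: a noncrossing partition of `{1,…,n}` all of whose blocks have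
even cardinality.  (`NC'(2n)` of the paper is `IsNCEven (2*n)`.) -/
def IsNCEven (n : ℕ) (π : Finset (Finset ℕ)) : Prop :=
  IsPartitionOn n π ∧ IsNoncrossing π ∧ ∀ B ∈ π, Even B.card

/-!
Induct on the even number `k`. Let `B'` be the block of `k - 1` and suppose `k ∉ B'`. The block `B`
of `k` has an odd minimum `m < k - 1`, so a point `d > k` of `B'` would give the crossing
`m < k - 1 < k < d`; hence `B' ⊆ [1, k - 1]`. By induction every pair `{2j - 1, 2j}` below `k` lies
in a single block, so `B' \ {k - 1}` is a union of such pairs and `B'` has odd cardinality.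
-/

open Finset

theorem even_card_of_odd_mem_iff_succ_mem {s : Finset ℕ} (h0 : 0 ∉ s)
    (h : ∀ x, Odd x → (x ∈ s ↔ x + 1 ∈ s)) : Even #s := by
  have hevens : s.filter Even = (s.filter (¬Even ·)).image (· + 1) := by
    ext y
    simp only [mem_filter, mem_image, Nat.not_even_iff_odd]
    constructor
    · rintro ⟨hy, hye⟩
      have hy0 : y ≠ 0 := fun hy0 => h0 (hy0 ▸ hy)
      have hodd : Odd (y - 1) := Nat.Even.sub_odd (by omega) hye odd_one
      exact ⟨y - 1, ⟨(h _ hodd).2 (by rwa [Nat.sub_add_cancel (by omega)]), hodd⟩, by omega⟩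
    · rintro ⟨x, ⟨hx, hxo⟩, rfl⟩
      exact ⟨(h x hxo).1 hx, hxo.add_one⟩
  have hcard := card_filter_add_card_filter_not (s := s) Even
  rw [hevens, card_image_of_injective _ (add_left_injective 1)] at hcard
  exact ⟨_, hcard.symm⟩

theorem blockMin_eq_min' {B : Finset ℕ} (hB : B.Nonempty) : blockMin B = B.min' hB := by
  rw [blockMin, ← coe_min' hB]
  rfl

theorem blockMin_mem {B : Finset ℕ} (hB : B.Nonempty) : blockMin B ∈ B :=
  blockMin_eq_min' hB ▸ B.min'_mem hB

theorem blockMin_le {B : Finset ℕ} {x : ℕ} (hx : x ∈ B) : blockMin B ≤ x :=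
  blockMin_eq_min' ⟨x, hx⟩ ▸ B.min'_le x hx

namespace IsPartitionOn

variable {n : ℕ} {π : Finset (Finset ℕ)}

theorem exists_mem (hπ : IsPartitionOn n π) {i : ℕ} (hi : i ∈ Icc 1 n) : ∃ B ∈ π, i ∈ B :=
  (hπ.2.2 i hi).exists

theorem eq_of_mem_of_mem (hπ : IsPartitionOn n π) {B B' : Finset ℕ} (hB : B ∈ π) (hB' : B' ∈ π)
    {x : ℕ} (hxB : x ∈ B) (hxB' : x ∈ B') : B = B' :=
  (hπ.2.2 x (hπ.2.1 B hB hxB)).unique ⟨hB, hxB⟩ ⟨hB', hxB'⟩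

theorem mem_iff_mem (hπ : IsPartitionOn n π) {B C : Finset ℕ} (hC : C ∈ π) (hB : B ∈ π)
    {x y : ℕ} (hxC : x ∈ C) (hyC : y ∈ C) : x ∈ B ↔ y ∈ B :=
  ⟨fun hxB => hπ.eq_of_mem_of_mem hC hB hxC hxB ▸ hyC,
    fun hyB => hπ.eq_of_mem_of_mem hC hB hyC hyB ▸ hxC⟩

/-- A point `d > k` of `B'` would give the crossing `blockMin B < k - 1 < k < d`. -/
theorem forall_mem_lt (hπ : IsPartitionOn n π) (hnc : IsNoncrossing π) {B B' : Finset ℕ}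
    (hB : B ∈ π) (hB' : B' ∈ π) (hBmin : ¬Even (blockMin B)) {k : ℕ} (hk : Even k)
    (hkB : k ∈ B) (hpB' : k - 1 ∈ B') (hkB' : k ∉ B') : ∀ d ∈ B', d < k := by
  have hBB' : B ≠ B' := fun h => hkB' (h ▸ hkB)
  have hm_ne_k : blockMin B ≠ k := fun h => hBmin (h ▸ hk)
  have hm_ne_p : blockMin B ≠ k - 1 := fun h =>
    hBB' (hπ.eq_of_mem_of_mem hB hB' (h ▸ blockMin_mem ⟨k, hkB⟩) hpB')
  have hm_le : blockMin B ≤ k := blockMin_le hkB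
  intro d hd
  by_contra! hkd
  have hdk : d ≠ k := fun h => hkB' (h ▸ hd)
  exact hBB' (hnc B hB B' hB' _ (blockMin_mem ⟨k, hkB⟩) k hkB (k - 1) hpB' d hd
    (by omega) (by omega) (by omega))

end IsPartitionOn

theorem IsNCEven.exists_mem_pred_and_mem {n : ℕ} {π : Finset (Finset ℕ)} (hπ : IsNCEven n π)
    (hmin : ∀ B ∈ π, ¬Even (blockMin B)) {k : ℕ} (hk1 : 1 ≤ k) (hkn : k ≤ n) (hk : Even k)
    (ih : ∀ j < k, 1 ≤ j → Even j → ∃ C ∈ π, j - 1 ∈ C ∧ j ∈ C) :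
    ∃ B ∈ π, k - 1 ∈ B ∧ k ∈ B := by
  obtain ⟨hpart, hnc, hcard⟩ := hπ
  have hk2 : 2 ≤ k := by obtain ⟨t, rfl⟩ := hk; omega
  obtain ⟨B', hB', hpB'⟩ := hpart.exists_mem (i := k - 1) (mem_Icc.2 ⟨by omega, by omega⟩)
  refine ⟨B', hB', hpB', ?_⟩
  by_contra hkB'
  obtain ⟨B, hB, hkB⟩ := hpart.exists_mem (mem_Icc.2 ⟨hk1, hkn⟩)
  have hlt := hpart.forall_mem_lt hnc hB hB' (hmin B hB) hk hkB hpB' hkB'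
  have hpaired : ∀ x, Odd x → (x ∈ B'.erase (k - 1) ↔ x + 1 ∈ B'.erase (k - 1)) := by
    intro x hx
    have hx1p : x + 1 ≠ k - 1 := by obtain ⟨t, ht⟩ := hk; obtain ⟨s, hs⟩ := hx; omega
    have hblock : x + 1 < k → ∃ C ∈ π, x ∈ C ∧ x + 1 ∈ C := fun h => by
      simpa using ih (x + 1) h (by omega) hx.add_one
    simp only [mem_erase]
    constructor
    · rintro ⟨hxp, hxB'⟩
      obtain ⟨C, hC, hxC, hx1C⟩ := hblock (by have := hlt x hxB'; omega)
      exact ⟨hx1p, (hpart.mem_iff_mem hC hB' hxC hx1C).1 hxB'⟩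
    · rintro ⟨-, hx1B'⟩
      have hx1k := hlt _ hx1B'
      obtain ⟨C, hC, hxC, hx1C⟩ := hblock hx1k
      exact ⟨by omega, (hpart.mem_iff_mem hC hB' hxC hx1C).2 hx1B'⟩
  have hzero : 0 ∉ B'.erase (k - 1) := fun h => by
    simpa using hpart.2.1 B' hB' (mem_of_mem_erase h)
  have hpred_even : Even (#B' - 1) :=
    card_erase_of_mem hpB' ▸ even_card_of_odd_mem_iff_succ_mem hzero hpaired
  exact Nat.not_even_iff_odd.2
    (Nat.Even.sub_odd (card_pos.2 ⟨_, hpB'⟩) (hcard B' hB') odd_one) hpred_even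

theorem nc_even_no_even_min_pairs_general (n : ℕ) (π : Finset (Finset ℕ))
    (hπ : IsNCEven (2 * n) π)
    (hmin : ∀ B ∈ π, ¬ Even (blockMin B)) :
    ∀ k, 1 ≤ k → k ≤ 2 * n → Even k → ∃ B ∈ π, k - 1 ∈ B ∧ k ∈ B := by
  intro k
  induction k using Nat.strong_induction_on with
  | _ k ih =>
    intro hk1 hkn hk
    exact hπ.exists_mem_pred_and_mem hmin hk1 hkn hk fun j hj hj1 hje =>
      ih j hj hj1 (by omega) hje

/-- if `π ∈ NC'(2n)` has no block with even minimum, then for every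
even `k ∈ {1,…,2n}`, the elements `k-1` and `k` lie in the same block of `π`. -/
theorem nc_even_no_even_min_pairs (n : ℕ) (hn : 0 < n) (π : Finset (Finset ℕ))
    (hπ : IsNCEven (2 * n) π)
    (hmin : ∀ B ∈ π, ¬ Even (blockMin B)) :
    ∀ k, 1 ≤ k → k ≤ 2 * n → Even k → ∃ B ∈ π, k - 1 ∈ B ∧ k ∈ B :=
  nc_even_no_even_min_pairs_general n π hπ hmin
end

section
/- For λ ∈ (0,1], the compositional inverse of the formal power series T(X) - 1 = (λX+1)(X+1) - 1 = λX² + (λ+1)X is U(X) = Σ_{n≥1} (-1)^{n-1} λ^{n-1} binom(2n,n) / (2(λ+1)^{2n-1}(2n-1)) · X^n. -/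
/-- Composition `f ∘ g` of formal power series (intended for `g` with zero
constant term, in which case this is the usual composition). -/
noncomputable def pscomp (f g : PowerSeries ℂ) : PowerSeries ℂ :=
  PowerSeries.mk fun n =>
    ∑ k ∈ Finset.range (n + 1), PowerSeries.coeff k f * PowerSeries.coeff n (g ^ k)

/-- The power series `U(X) = Σ_{n≥1} (-1)^{n-1} λ^{n-1} binom(2n,n)
/ (2(λ+1)^{2n-1}(2n-1)) · Xⁿ`. -/
noncomputable def Useries (l : ℝ) : PowerSeries ℂ :=
  PowerSeries.mk fun n =>
    if n = 0 then 0
    else ((-1 : ℂ)) ^ (n - 1) * (l : ℂ) ^ (n - 1) * (Nat.choose (2 * n) n : ℂ) /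
      (2 * ((l : ℂ) + 1) ^ (2 * n - 1) * (2 * n - 1 : ℕ))


/-!
Writing `μ = λ + 1` and `C` for the Catalan generating function, `U(X) = μ⁻¹ X · C(-λX/μ²)`,
so the Catalan equation `C = 1 + X C²` turns `λU² + μU` into `X`. A right compositional
inverse of a series with invertible linear coefficient is also a left inverse, which gives
`U ∘ (T - 1) = X`.
-/

open PowerSeries

lemma pscomp_eq_subst (f : ℂ⟦X⟧) {g : ℂ⟦X⟧} (hg : constantCoeff g = 0) :
    pscomp f g = f.subst g := by
  ext n
  rw [pscomp, coeff_mk, coeff_subst' (HasSubst.of_constantCoeff_zero' hg)]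
  refine (finsum_eq_sum_of_support_subset _ fun k hk => ?_).symm
  obtain ⟨u, rfl⟩ := X_dvd_iff.2 hg
  contrapose! hk
  rw [Function.mem_support, not_not, mul_pow, coeff_X_pow_mul', if_neg (by simpa using hk),
    mul_zero]

namespace PowerSeries

variable {R : Type*} [CommRing R]

theorem subst_eq_X_of_subst_eq_X {P Q : R⟦X⟧} (hP : constantCoeff P = 0)
    (hP₁ : IsUnit (coeff 1 P)) (hQ : HasSubst Q) (hPQ : P.subst Q = X) :
    Q.subst P = X := by
  have hinv : P.substInvOfIsUnit hP₁ = Q := calc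
    P.substInvOfIsUnit hP₁ = subst (subst Q P) (P.substInvOfIsUnit hP₁) := by rw [hPQ, X_subst]
    _ = subst Q (subst P (P.substInvOfIsUnit hP₁)) :=
      (subst_comp_subst_apply (HasSubst.of_constantCoeff_zero' hP) hQ _).symm
    _ = Q := by rw [subst_substInvOfIsUnit_left P hP hP₁, subst_X hQ]
  rw [← hinv, subst_substInvOfIsUnit_left P hP hP₁]

theorem rescale_map_catalanSeries_eq (a : R) :
    rescale a (map (Nat.castRingHom R) catalanSeries) =
      1 + C a * X * rescale a (map (Nat.castRingHom R) catalanSeries) ^ 2 := by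
  conv_lhs => rw [← catalanSeries_sq_mul_X_add_one]
  simp only [map_add, map_mul, map_pow, map_X, map_one, rescale_X]
  rw [add_comm, mul_comm]

end PowerSeries

theorem Nat.choose_two_mul_succ_eq_catalan (m : ℕ) :
    (2 * (m + 1)).choose (m + 1) = 2 * (2 * m + 1) * catalan m := by
  rw [← centralBinom_eq_two_mul_choose]
  refine Nat.eq_of_mul_eq_mul_left m.succ_pos ?_
  rw [succ_mul_centralBinom_succ, ← succ_mul_catalan_eq_centralBinom, mul_left_comm]

theorem Useries_eq_rescale_catalanSeries (l : ℝ) (hl : (l : ℂ) + 1 ≠ 0) :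
    Useries l = C ((l : ℂ) + 1)⁻¹ * X *
      rescale (-l / ((l : ℂ) + 1) ^ 2) (map (Nat.castRingHom ℂ) catalanSeries) := by
  ext (_ | m)
  · simp [Useries]
  · rw [Useries, coeff_mk, if_neg m.succ_ne_zero, mul_assoc (C _), coeff_C_mul, coeff_succ_X_mul,
      coeff_rescale, coeff_map, catalanSeries_coeff, Nat.choose_two_mul_succ_eq_catalan,
      show 2 * (m + 1) - 1 = 2 * m + 1 by omega, Nat.add_sub_cancel]
    have h2m : ((2 * m + 1 : ℕ) : ℂ) ≠ 0 := Nat.cast_ne_zero.2 (by omega)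
    push_cast at h2m ⊢
    rw [div_pow, ← pow_mul]
    field_simp
    ring

theorem constantCoeff_Useries (l : ℝ) : constantCoeff (Useries l) = 0 := by
  simp [Useries, ← coeff_zero_eq_constantCoeff_apply]

theorem subst_Useries_eq_X (l : ℝ) (hl : (l : ℂ) + 1 ≠ 0) :
    ((l : ℂ) • X ^ 2 + ((l : ℂ) + 1) • X : ℂ⟦X⟧).subst (Useries l) = X := by
  have hU := HasSubst.of_constantCoeff_zero' (constantCoeff_Useries l)
  rw [subst_add hU, subst_smul hU, subst_smul hU, subst_pow hU, subst_X hU,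
    Useries_eq_rescale_catalanSeries l hl, smul_eq_C_mul, smul_eq_C_mul]
  set D := rescale (-l / ((l : ℂ) + 1) ^ 2) (map (Nat.castRingHom ℂ) catalanSeries)
  have hD : D = 1 + C (-l / ((l : ℂ) + 1) ^ 2) * X * D ^ 2 := rescale_map_catalanSeries_eq _
  have hμ : C ((l : ℂ) + 1) * C ((l : ℂ) + 1)⁻¹ = 1 := by
    rw [← map_mul, mul_inv_cancel₀ hl, map_one]
  have ha : C (-l / ((l : ℂ) + 1) ^ 2) = - C (l : ℂ) * C ((l : ℂ) + 1)⁻¹ ^ 2 := by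
    rw [neg_div, div_eq_mul_inv, ← inv_pow, map_neg, map_mul, map_pow, neg_mul]
  linear_combination (X * D) * hμ + X * hD + (X ^ 2 * D ^ 2) * ha

/-- for `λ ∈ (0,1]`, `U` is the compositional inverse of
`T(X) - 1 = λX² + (λ+1)X`, i.e. `U ∘ (T-1) = X` and `(T-1) ∘ U = X`. -/
theorem Useries_is_comp_inverse (l : ℝ) (hl : l ∈ Set.Ioc (0 : ℝ) 1) :
    let S : PowerSeries ℂ :=
      (l : ℂ) • PowerSeries.X ^ 2 + ((l : ℂ) + 1) • PowerSeries.X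
    pscomp (Useries l) S = PowerSeries.X ∧ pscomp S (Useries l) = PowerSeries.X := by
  intro S
  have hμ : (l : ℂ) + 1 ≠ 0 := by exact_mod_cast (by linarith [hl.1] : l + 1 ≠ 0)
  have hS₀ : constantCoeff S = 0 := by simp [S, smul_eq_C_mul]
  have hS₁ : IsUnit (coeff 1 S) := by simpa [S, smul_eq_C_mul, coeff_X_pow] using hμ
  have hU₀ := constantCoeff_Useries l
  have hSU : S.subst (Useries l) = X := subst_Useries_eq_X l hμ
  rw [pscomp_eq_subst _ hS₀, pscomp_eq_subst _ hU₀]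
  exact ⟨subst_eq_X_of_subst_eq_X hS₀ hS₁ (HasSubst.of_constantCoeff_zero' hU₀) hSU, hSU⟩
end

section
/- For λ ∈ (0,1), set κ = 2(λ(2-λ))^{1/2}. Then κ ∈ (0,2), and the function f(x) = (κ² - (x²-2)²)^{1/2} / (πλ|x|(4-x²)), defined on the set O = (-(2+κ)^{1/2}, -(2-κ)^{1/2}) ∪ ((2-κ)^{1/2}, (2+κ)^{1/2}) and 0 elsewhere, is a probability density: ∫_O f(x) dx = 1. -/
/-!
Substituting `u = x² - 2` turns the integral over the positive component of `O` into
`½ ∫_{-κ}^{κ} √(κ² - u²) / (4 - u²) du`. With `c = 2(1 - λ)`, so that `c² + κ² = 4`, the function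
`arcsin (u / κ) - (c / 2) arcsin (c u / (κ √(4 - u²)))` is a primitive of this integrand, whence
the integral equals `π (2 - c) / 2`. The density is even, so the two components contribute
equally and the total mass is `2 · (π λ)⁻¹ · π (2 - c) / 4 = (2 - c) / (2 λ) = 1`.
-/
open MeasureTheory Set Real

theorem integral_indicator_Ioo_union_neg_Ioo_of_even {E : Type*} [NormedAddCommGroup E]
    [NormedSpace ℝ E] {f : ℝ → E} (hf : ∀ x, f (-x) = f x) {a b : ℝ} (ha : 0 ≤ a)
    (hab : a ≤ b) (hint : IntervalIntegrable f volume a b) :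
    ∫ x, (Ioo (-b) (-a) ∪ Ioo a b).indicator f x = (2 : ℝ) • ∫ x in a..b, f x := by
  have hint_neg : IntervalIntegrable f volume (-b) (-a) := by
    simpa only [hf] using ((IntervalIntegrable.iff_comp_neg).mp hint).symm
  have hdisj : Disjoint (Ioo (-b) (-a)) (Ioo a b) :=
    disjoint_left.mpr fun x hx₁ hx₂ => by linarith [hx₁.2, hx₂.1]
  have hpos : ∫ x in Ioo a b, f x = ∫ x in a..b, f x := by
    rw [intervalIntegral.integral_of_le hab, integral_Ioc_eq_integral_Ioo]
  have hneg : ∫ x in Ioo (-b) (-a), f x = ∫ x in a..b, f x := by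
    rw [← integral_Ioc_eq_integral_Ioo, ← intervalIntegral.integral_of_le (neg_le_neg hab),
      ← intervalIntegral.integral_comp_neg]
    simp only [hf]
  rw [integral_indicator (measurableSet_Ioo.union measurableSet_Ioo),
    setIntegral_union hdisj measurableSet_Ioo
      (hint_neg.1.mono_set Ioo_subset_Ioc_self)
      (hint.1.mono_set Ioo_subset_Ioc_self), hpos, hneg, two_smul]

theorem pos_and_four_sub_sq_pos_of_mem_Icc_sqrt {κ x : ℝ} (hκ : κ < 2)
    (hx : x ∈ Icc √(2 - κ) √(2 + κ)) : 0 < x ∧ 0 < 4 - x ^ 2 := by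
  have hx0 : 0 < x := (sqrt_pos.mpr (by linarith)).trans_le hx.1
  refine ⟨hx0, sub_pos.mpr ?_⟩
  calc x ^ 2 ≤ √(2 + κ) ^ 2 := pow_le_pow_left₀ hx0.le hx.2 2
    _ = 2 + κ := sq_sqrt (sqrt_pos.mp (hx0.trans_le hx.2)).le
    _ < 4 := by linarith

section Primitive

variable {κ c : ℝ}

theorem hasDerivAt_arcsin_div_sqrt (hκ : 0 < κ) (hcκ : c ^ 2 + κ ^ 2 = 4) {u : ℝ}
    (hu : u ∈ Ioo (-κ) κ) :
    HasDerivAt (fun v => arcsin (c * v / (κ * √(4 - v ^ 2))))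
      (2 * c / ((4 - u ^ 2) * √(κ ^ 2 - u ^ 2))) u := by
  have hS : 0 < κ ^ 2 - u ^ 2 := by nlinarith [hu.1, hu.2]
  have hW : 0 < 4 - u ^ 2 := by nlinarith
  have hSsq := sq_sqrt hS.le
  have hWsq := sq_sqrt hW.le
  have hSpos := sqrt_pos.mpr hS
  have hWpos := sqrt_pos.mpr hW
  have hquot : HasDerivAt (fun v => c * v / (κ * √(4 - v ^ 2)))
      (4 * c / (κ * (4 - u ^ 2) * √(4 - u ^ 2))) u := by
    have hden := (((hasDerivAt_pow 2 u).const_sub 4).sqrt hW.ne').const_mul κ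
    refine (((hasDerivAt_id' u).const_mul c).div hden (by positivity)).congr_deriv ?_
    field_simp
    linear_combination (-2 * c * u ^ 2) * hWsq
  -- `κ² (4 - u²) - c² u² = 4 (κ² - u²)` because `c² + κ² = 4`
  have hone_sub : 1 - (c * u / (κ * √(4 - u ^ 2))) ^ 2 =
      (2 * √(κ ^ 2 - u ^ 2) / (κ * √(4 - u ^ 2))) ^ 2 := by
    field_simp
    linear_combination (κ ^ 2) * hWsq - 4 * hSsq - u ^ 2 * hcκ
  have habs : |c * u / (κ * √(4 - u ^ 2))| < 1 := by
    rw [← sq_lt_one_iff_abs_lt_one, ← sub_pos, hone_sub]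
    positivity
  have harcsin := hasDerivAt_arcsin (abs_lt.mp habs).1.ne' (abs_lt.mp habs).2.ne
  refine (harcsin.comp u hquot).congr_deriv ?_
  rw [hone_sub, sqrt_sq (by positivity)]
  field_simp
  ring

noncomputable def sqrtDivFourSubPrimitive (κ c u : ℝ) : ℝ :=
  arcsin (u / κ) - c / 2 * arcsin (c * u / (κ * √(4 - u ^ 2)))

theorem hasDerivAt_sqrtDivFourSubPrimitive (hκ : 0 < κ) (hcκ : c ^ 2 + κ ^ 2 = 4) {u : ℝ}
    (hu : u ∈ Ioo (-κ) κ) :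
    HasDerivAt (sqrtDivFourSubPrimitive κ c) (√(κ ^ 2 - u ^ 2) / (4 - u ^ 2)) u := by
  have hS : 0 < κ ^ 2 - u ^ 2 := by nlinarith [hu.1, hu.2]
  have hW : 0 < 4 - u ^ 2 := by nlinarith
  have hSsq := sq_sqrt hS.le
  have hSpos := sqrt_pos.mpr hS
  have hdiv : u / κ ∈ Ioo (-1) 1 := by
    rw [mem_Ioo, lt_div_iff₀ hκ, div_lt_iff₀ hκ]
    exact ⟨by linarith [hu.1], by linarith [hu.2]⟩
  have harcsin := (hasDerivAt_arcsin hdiv.1.ne' hdiv.2.ne).comp u ((hasDerivAt_id' u).div_const κ)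
  have hsqrt : √(1 - (u / κ) ^ 2) = √(κ ^ 2 - u ^ 2) / κ := by
    rw [show 1 - (u / κ) ^ 2 = (κ ^ 2 - u ^ 2) / κ ^ 2 by field_simp, sqrt_div hS.le,
      sqrt_sq hκ.le]
  refine (harcsin.sub ((hasDerivAt_arcsin_div_sqrt hκ hcκ hu).const_mul (c / 2))).congr_deriv ?_
  rw [hsqrt]
  field_simp
  linear_combination (-1) * hSsq - hcκ

theorem continuousOn_sqrtDivFourSubPrimitive (hκ : 0 < κ) (hc : 0 < c)
    (hcκ : c ^ 2 + κ ^ 2 = 4) :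
    ContinuousOn (sqrtDivFourSubPrimitive κ c) (Icc (-κ) κ) := by
  refine (continuous_arcsin.comp (continuous_id.div_const κ)).continuousOn.sub
    (continuousOn_const.mul (continuous_arcsin.comp_continuousOn (ContinuousOn.div
      (by fun_prop) (by fun_prop) fun u hu => ?_)))
  have : 0 < 4 - u ^ 2 := by nlinarith [hu.1, hu.2, sq_pos_of_pos hc]
  positivity

theorem sqrtDivFourSubPrimitive_self (hκ : 0 < κ) (hc : 0 < c) (hcκ : c ^ 2 + κ ^ 2 = 4) :
    sqrtDivFourSubPrimitive κ c κ = π / 2 - c * π / 4 := by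
  rw [sqrtDivFourSubPrimitive, show 4 - κ ^ 2 = c ^ 2 by linarith, sqrt_sq hc.le, div_self hκ.ne',
    show c * κ / (κ * c) = 1 by field_simp, arcsin_one]
  ring

theorem sqrtDivFourSubPrimitive_neg (κ c u : ℝ) :
    sqrtDivFourSubPrimitive κ c (-u) = -sqrtDivFourSubPrimitive κ c u := by
  simp only [sqrtDivFourSubPrimitive, neg_sq, neg_div, mul_neg, arcsin_neg]
  ring

theorem integral_sqrt_sq_sub_sq_div_four_sub_sq (hκ : 0 < κ) (hc : 0 < c)
    (hcκ : c ^ 2 + κ ^ 2 = 4) :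
    ∫ u in -κ..κ, √(κ ^ 2 - u ^ 2) / (4 - u ^ 2) = π * (2 - c) / 2 := by
  have hint : IntervalIntegrable (fun u => √(κ ^ 2 - u ^ 2) / (4 - u ^ 2)) volume (-κ) κ := by
    refine ContinuousOn.intervalIntegrable (ContinuousOn.div (by fun_prop) (by fun_prop)
      fun u hu => ?_)
    rw [uIcc_of_le (by linarith)] at hu
    nlinarith [hu.1, hu.2, sq_pos_of_pos hc]
  rw [intervalIntegral.integral_eq_sub_of_hasDerivAt_of_le (by linarith)
    (continuousOn_sqrtDivFourSubPrimitive hκ hc hcκ)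
    (fun u hu => hasDerivAt_sqrtDivFourSubPrimitive hκ hcκ hu) hint,
    sqrtDivFourSubPrimitive_neg, sqrtDivFourSubPrimitive_self hκ hc hcκ]
  ring

theorem integral_sqrt_sq_sub_sq_div_mul_four_sub_sq (hκ : 0 < κ) (hc : 0 < c)
    (hcκ : c ^ 2 + κ ^ 2 = 4) :
    ∫ x in √(2 - κ)..√(2 + κ), √(κ ^ 2 - (x ^ 2 - 2) ^ 2) / (x * (4 - x ^ 2)) =
      π * (2 - c) / 4 := by
  have hκ2 : κ < 2 := by nlinarith [sq_pos_of_pos hc]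
  have ha := sq_sqrt (by linarith : 0 ≤ 2 - κ)
  have hb := sq_sqrt (by linarith : 0 ≤ 2 + κ)
  have hab : √(2 - κ) ≤ √(2 + κ) := sqrt_le_sqrt (by linarith)
  have hsubst := intervalIntegral.integral_comp_mul_deriv_of_deriv_nonneg
    (f := fun x => x ^ 2 - 2) (f' := fun x => 2 * x)
    (g := fun u => √(κ ^ 2 - u ^ 2) / (4 - u ^ 2)) (a := √(2 - κ)) (b := √(2 + κ))
    (by fun_prop) (fun x _ => by simpa using (hasDerivAt_pow 2 x).sub_const 2)
    (fun x hx => by rw [min_eq_left hab] at hx; linarith [hx.1, sqrt_nonneg (2 - κ)])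
  simp only [ha, hb, Function.comp_apply] at hsubst
  rw [show 2 - κ - 2 = -κ by ring, show 2 + κ - 2 = κ by ring,
    integral_sqrt_sq_sub_sq_div_four_sub_sq hκ hc hcκ] at hsubst
  rw [show π * (2 - c) / 4 = (π * (2 - c) / 2) / 2 by ring, ← hsubst,
    ← intervalIntegral.integral_div]
  refine intervalIntegral.integral_congr fun x hx => ?_
  rw [uIcc_of_le hab] at hx
  obtain ⟨hx0, hx4⟩ := pos_and_four_sub_sq_pos_of_mem_Icc_sqrt hκ2 hx
  rw [show 4 - (x ^ 2 - 2) ^ 2 = x ^ 2 * (4 - x ^ 2) by ring]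
  field_simp

end Primitive

/-- for `λ ∈ (0,1)` and `κ = 2√(λ(2-λ))`, we have `κ ∈ (0,2)` and
`x ↦ √(κ²-(x²-2)²)/(πλ|x|(4-x²))`, supported on
`O = (-(2+κ)^{1/2}, -(2-κ)^{1/2}) ∪ ((2-κ)^{1/2}, (2+κ)^{1/2})`, is a probability
density. -/
theorem bernoulli_density_integral (l : ℝ) (hl0 : 0 < l) (hl1 : l < 1) :
    let κ : ℝ := 2 * Real.sqrt (l * (2 - l))
    let O : Set ℝ :=
      Set.Ioo (-(Real.sqrt (2 + κ))) (-(Real.sqrt (2 - κ))) ∪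
        Set.Ioo (Real.sqrt (2 - κ)) (Real.sqrt (2 + κ))
    (0 < κ ∧ κ < 2) ∧
      ∫ x : ℝ, O.indicator
        (fun x => Real.sqrt (κ ^ 2 - (x ^ 2 - 2) ^ 2) /
          (Real.pi * l * |x| * (4 - x ^ 2))) x = 1 := by
  intro κ O
  have hl : 0 < l * (2 - l) := by nlinarith
  have hκ : 0 < κ := mul_pos two_pos (sqrt_pos.mpr hl)
  have hc : 0 < 2 * (1 - l) := by linarith
  have hcκ : (2 * (1 - l)) ^ 2 + κ ^ 2 = 4 := by
    simp only [κ, mul_pow, sq_sqrt hl.le]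
    ring
  have hκ2 : κ < 2 := by nlinarith
  refine ⟨⟨hκ, hκ2⟩, ?_⟩
  have hab : √(2 - κ) ≤ √(2 + κ) := sqrt_le_sqrt (by linarith)
  have hden : ∀ x ∈ uIcc √(2 - κ) √(2 + κ), 0 < x ∧ 0 < 4 - x ^ 2 := fun x hx =>
    pos_and_four_sub_sq_pos_of_mem_Icc_sqrt hκ2 (uIcc_of_le hab ▸ hx)
  have hint : IntervalIntegrable (fun x => √(κ ^ 2 - (x ^ 2 - 2) ^ 2) /
      (π * l * |x| * (4 - x ^ 2))) volume √(2 - κ) √(2 + κ) :=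
    (ContinuousOn.div (by fun_prop) (by fun_prop) fun x hx => by
      obtain ⟨hx0, hx4⟩ := hden x hx
      positivity).intervalIntegrable
  have hpos : ∫ x in √(2 - κ)..√(2 + κ), √(κ ^ 2 - (x ^ 2 - 2) ^ 2) /
      (π * l * |x| * (4 - x ^ 2)) = (π * l)⁻¹ * (π * (2 - 2 * (1 - l)) / 4) := by
    rw [← integral_sqrt_sq_sub_sq_div_mul_four_sub_sq hκ hc hcκ,
      ← intervalIntegral.integral_const_mul]
    refine intervalIntegral.integral_congr fun x hx => ?_
    obtain ⟨hx0, hx4⟩ := hden x hx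
    rw [abs_of_pos hx0]
    field_simp
  rw [integral_indicator_Ioo_union_neg_Ioo_of_even (fun x => by simp only [neg_sq, abs_neg])
    (sqrt_nonneg _) hab hint, hpos, smul_eq_mul]
  field_simp
  ring
end

section
/- Let (μ_n) be a sequence of symmetric probability measures on ℝ converging weakly to a symmetric probability measure μ. Then the Cauchy transforms G_{μ_n} converge to G_μ uniformly on the set {z ∈ ℂ : Im z ≥ 1}, and consequently sup_{Im z ≥ 1} |G_{μ_n}(z) - G_μ(z)| → 0 defines a metric compatible with weak convergence on the set of probability measures on ℝ. -/
/-!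
On a half-plane `{Im z ≥ c}`, `c > 0`, the kernel `t ↦ (z - t)⁻¹` is bounded and continuous, so
weak convergence gives pointwise convergence of the transforms, and the resolvent identity makes
all transforms uniformly Lipschitz there; by equicontinuity the convergence is uniform on compact
sets. Far out, every transform of a tight family is uniformly small, since the kernel is at most
`(‖z‖ - r)⁻¹` on `[-r, r]` and at most `(Im z)⁻¹` elsewhere; and a weakly convergent sequence
together with its limit is tight (Prokhorov).
-/

open MeasureTheory Complex

/-- A probability measure on `ℝ` is symmetric if it is invariant under `x ↦ -x`. -/
def IsSymmetricMeasure (μ : Measure ℝ) : Prop := μ.map (fun x => -x) = μ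

/-- The Cauchy transform `G_μ(z) = ∫ dμ(t)/(z-t)`. -/
noncomputable def cauchyT (μ : Measure ℝ) (z : ℂ) : ℂ := ∫ t, (z - (t : ℂ))⁻¹ ∂μ

/-- The branch of the square root on `ℂ∖[0,∞)` mapping into the upper half plane:
`√z = i·(-z)^{1/2}` with the principal power. -/
noncomputable def sqrtCut (z : ℂ) : ℂ := Complex.I * (-z) ^ (1 / 2 : ℂ)

/-- The rectangular Cauchy transform with ratio `λ`:
`H_μ(z) = λ G_μ(1/√z)² + (1-λ)√z G_μ(1/√z)` for `z ∈ ℂ∖[0,∞)`. -/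
noncomputable def rectH (l : ℝ) (μ : Measure ℝ) (z : ℂ) : ℂ :=
  (l : ℂ) * (cauchyT μ (sqrtCut z)⁻¹) ^ 2 +
    (1 - (l : ℂ)) * sqrtCut z * cauchyT μ (sqrtCut z)⁻¹

/-- Tightness of a family of measures on `ℝ`. -/
def TightFamily (A : Set (Measure ℝ)) : Prop :=
  ∀ ε : ℝ, 0 < ε → ∃ M : ℝ, ∀ μ ∈ A, μ (Set.Icc (-M) M)ᶜ < ENNReal.ofReal ε

open Filter Topology Metric BoundedContinuousFunction

theorem EquicontinuousOn.tendstoUniformlyOn_of_tendsto {ι X α : Type*} [TopologicalSpace X]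
    [UniformSpace α] {F : ι → X → α} {f : X → α} {K : Set X} {l : Filter ι}
    (hK : IsCompact K) (hF : EquicontinuousOn F K)
    (h : ∀ x ∈ K, Tendsto (fun i => F i x) l (𝓝 (f x))) :
    TendstoUniformlyOn F f l K := by
  have : CompactSpace K := isCompact_iff_compactSpace.mp hK
  rw [tendstoUniformlyOn_iff_tendstoUniformly_comp_coe]
  refine UniformFun.tendsto_iff_tendstoUniformly.mp
    (((equicontinuous_restrict_iff F).mpr hF).tendsto_uniformFun_iff_pi l _ |>.mpr ?_)
  exact tendsto_pi_nhds.mpr fun x => h x x.2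

theorem LipschitzOnWith.equicontinuousOn {ι X α : Type*} [PseudoEMetricSpace X]
    [PseudoEMetricSpace α] {F : ι → X → α} {s : Set X} {L : NNReal}
    (hF : ∀ i, LipschitzOnWith L (F i) s) : EquicontinuousOn F s :=
  (equicontinuous_restrict_iff F).mp
    (LipschitzWith.uniformEquicontinuous _ L fun i => (hF i).to_restrict).equicontinuous

lemma sub_ofReal_ne_zero {z : ℂ} (hz : 0 < z.im) (t : ℝ) : z - t ≠ 0 :=
  fun h => hz.ne' (by simpa using congrArg im h)

lemma norm_inv_sub_ofReal_le {z : ℂ} (hz : 0 < z.im) (t : ℝ) : ‖(z - t)⁻¹‖ ≤ z.im⁻¹ := by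
  rw [norm_inv]
  exact inv_anti₀ hz (by simpa [abs_of_pos hz] using abs_im_le_norm (z - t))

lemma continuous_inv_sub_ofReal {z : ℂ} (hz : 0 < z.im) : Continuous fun t : ℝ => (z - t)⁻¹ :=
  (continuous_const.sub continuous_ofReal).inv₀ (sub_ofReal_ne_zero hz)

noncomputable def cauchyKernel {z : ℂ} (hz : 0 < z.im) : ℝ →ᵇ ℂ :=
  .ofNormedAddCommGroup _ (continuous_inv_sub_ofReal hz) _ (norm_inv_sub_ofReal_le hz)

lemma integrable_inv_sub_ofReal (ν : Measure ℝ) [IsFiniteMeasure ν] {z : ℂ} (hz : 0 < z.im) :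
    Integrable (fun t : ℝ => (z - t)⁻¹) ν :=
  (cauchyKernel hz).integrable ν

lemma norm_cauchyT_sub_le (ν : Measure ℝ) [IsProbabilityMeasure ν] {z w : ℂ} (hz : 0 < z.im)
    (hw : 0 < w.im) : ‖cauchyT ν z - cauchyT ν w‖ ≤ ‖z - w‖ * (z.im⁻¹ * w.im⁻¹) := by
  have resolvent (t : ℝ) : (z - t)⁻¹ - (w - t)⁻¹ = (w - z) * ((z - t)⁻¹ * (w - t)⁻¹) := by
    field_simp [sub_ofReal_ne_zero hz t, sub_ofReal_ne_zero hw t]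
    ring
  have bound (t : ℝ) : ‖(z - t)⁻¹ - (w - t)⁻¹‖ ≤ ‖z - w‖ * (z.im⁻¹ * w.im⁻¹) := by
    rw [resolvent, norm_mul, norm_mul, norm_sub_rev]
    gcongr
    · exact norm_inv_sub_ofReal_le hz t
    · exact norm_inv_sub_ofReal_le hw t
  rw [cauchyT, cauchyT, ← integral_sub (integrable_inv_sub_ofReal ν hz)
    (integrable_inv_sub_ofReal ν hw)]
  simpa using norm_integral_le_of_norm_le_const (μ := ν) (Eventually.of_forall bound)

lemma lipschitzOnWith_cauchyT (ν : Measure ℝ) [IsProbabilityMeasure ν] {c : ℝ} (hc : 0 < c) :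
    LipschitzOnWith (c⁻¹ ^ 2).toNNReal (cauchyT ν) {z | c ≤ z.im} := by
  refine LipschitzOnWith.of_dist_le' fun z hz w hw => ?_
  have hz' : z.im⁻¹ ≤ c⁻¹ := inv_anti₀ hc hz
  have hw' : w.im⁻¹ ≤ c⁻¹ := inv_anti₀ hc hw
  rw [dist_eq_norm, dist_eq_norm]
  calc ‖cauchyT ν z - cauchyT ν w‖ ≤ ‖z - w‖ * (z.im⁻¹ * w.im⁻¹) :=
        norm_cauchyT_sub_le ν (hc.trans_le hz) (hc.trans_le hw)
    _ ≤ ‖z - w‖ * (c⁻¹ * c⁻¹) := by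
        gcongr
        exact inv_nonneg.mpr (hc.le.trans hw)
    _ = c⁻¹ ^ 2 * ‖z - w‖ := by ring

lemma norm_cauchyT_le_add_tail (ν : Measure ℝ) [IsProbabilityMeasure ν] {z : ℂ} (hz : 0 < z.im)
    {r : ℝ} (hr : r < ‖z‖) :
    ‖cauchyT ν z‖ ≤ (‖z‖ - r)⁻¹ + ν.real (closedBall 0 r)ᶜ * z.im⁻¹ := by
  have bound (t : ℝ) :
      ‖(z - t)⁻¹‖ ≤ (‖z‖ - r)⁻¹ + (closedBall 0 r)ᶜ.indicator (fun _ => z.im⁻¹) t := by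
    by_cases ht : t ∈ closedBall 0 r
    · rw [Set.indicator_of_notMem (Set.notMem_compl_iff.mpr ht), add_zero, norm_inv]
      refine inv_anti₀ (sub_pos.mpr hr) ?_
      have : ‖(t : ℂ)‖ ≤ r := by simpa using ht
      linarith [norm_sub_norm_le z (t : ℂ)]
    · rw [Set.indicator_of_mem ht]
      linarith [norm_inv_sub_ofReal_le hz t, inv_pos.mpr (sub_pos.mpr hr)]
  have hs : MeasurableSet (closedBall (0 : ℝ) r)ᶜ := measurableSet_closedBall.compl
  calc ‖cauchyT ν z‖
      ≤ ∫ t, ((‖z‖ - r)⁻¹ + (closedBall 0 r)ᶜ.indicator (fun _ => z.im⁻¹) t) ∂ν :=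
        norm_integral_le_of_norm_le ((integrable_const _).add ((integrable_const _).indicator hs))
          (Eventually.of_forall bound)
    _ = (‖z‖ - r)⁻¹ + ν.real (closedBall 0 r)ᶜ * z.im⁻¹ := by
        rw [integral_add (integrable_const _) ((integrable_const _).indicator hs),
          integral_indicator_const _ hs]
        simp

lemma isTightMeasureSet_of_tendsto {X : Type*} [PseudoMetricSpace X] [MeasurableSpace X]
    [OpensMeasurableSpace X] [SecondCountableTopology X] [CompleteSpace X]
    {μs : ℕ → ProbabilityMeasure X} {μ : ProbabilityMeasure X} (h : Tendsto μs atTop (𝓝 μ)) :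
    IsTightMeasureSet {(ν : Measure X) | ν ∈ insert μ (Set.range μs)} :=
  isTightMeasureSet_of_isCompact_closure h.isCompact_insert_range.closure

lemma exists_norm_cauchyT_le_of_isTightMeasureSet {S : Set (ProbabilityMeasure ℝ)}
    (hS : IsTightMeasureSet {(ν : Measure ℝ) | ν ∈ S}) {c ε : ℝ} (hc : 0 < c) (hε : 0 < ε) :
    ∃ R, ∀ ν ∈ S, ∀ z : ℂ, c ≤ z.im → R ≤ ‖z‖ → ‖cauchyT ν z‖ ≤ ε := by
  obtain ⟨r, hr⟩ := ((tendsto_measure_compl_closedBall_of_isTightMeasureSet hS 0).eventually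
    (gt_mem_nhds (ENNReal.ofReal_pos.mpr (by positivity : 0 < c * ε / 2)))).exists
  refine ⟨r + 2 / ε, fun ν hν z hz hR => ?_⟩
  have hνr : (ν : Measure ℝ).real (closedBall 0 r)ᶜ ≤ c * ε / 2 :=
    ENNReal.toReal_le_of_le_ofReal (by positivity)
      ((le_iSup₂_of_le (ν : Measure ℝ) ⟨ν, hν, rfl⟩ le_rfl).trans hr.le)
  have hfar : (‖z‖ - r)⁻¹ ≤ ε / 2 := by
    simpa using inv_anti₀ (by positivity) (by linarith : 2 / ε ≤ ‖z‖ - r)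
  have him : z.im⁻¹ ≤ c⁻¹ := inv_anti₀ hc hz
  have him0 : 0 ≤ z.im⁻¹ := inv_nonneg.mpr (hc.le.trans hz)
  calc ‖cauchyT ν z‖ ≤ (‖z‖ - r)⁻¹ + (ν : Measure ℝ).real (closedBall 0 r)ᶜ * z.im⁻¹ :=
        norm_cauchyT_le_add_tail ν (hc.trans_le hz) (by linarith [div_pos two_pos hε])
    _ ≤ ε / 2 + c * ε / 2 * c⁻¹ := by gcongr
    _ = ε := by field_simp; ring

lemma tendsto_cauchyT {ι : Type*} {l : Filter ι} {μs : ι → ProbabilityMeasure ℝ}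
    {μ : ProbabilityMeasure ℝ} (h : Tendsto μs l (𝓝 μ)) {z : ℂ} (hz : 0 < z.im) :
    Tendsto (fun i => cauchyT (μs i) z) l (𝓝 (cauchyT μ z)) :=
  (ProbabilityMeasure.tendsto_iff_forall_integral_rclike_tendsto ℂ).mp h (cauchyKernel hz)

theorem tendstoUniformlyOn_cauchyT {μs : ℕ → ProbabilityMeasure ℝ} {μ : ProbabilityMeasure ℝ}
    (h : Tendsto μs atTop (𝓝 μ)) {c : ℝ} (hc : 0 < c) :
    TendstoUniformlyOn (fun n => cauchyT (μs n)) (cauchyT μ) atTop {z | c ≤ z.im} := by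
  rw [Metric.tendstoUniformlyOn_iff]
  intro ε hε
  obtain ⟨R, hR⟩ := exists_norm_cauchyT_le_of_isTightMeasureSet (isTightMeasureSet_of_tendsto h)
    hc (by positivity : 0 < ε / 3)
  have hK : IsCompact (closedBall 0 R ∩ {z : ℂ | c ≤ z.im}) :=
    (isCompact_closedBall 0 R).inter_right (isClosed_le continuous_const continuous_im)
  have hnear : TendstoUniformlyOn (fun n => cauchyT (μs n)) (cauchyT μ) atTop
      (closedBall 0 R ∩ {z : ℂ | c ≤ z.im}) :=
    EquicontinuousOn.tendstoUniformlyOn_of_tendsto hK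
      (LipschitzOnWith.equicontinuousOn fun n =>
        (lipschitzOnWith_cauchyT _ hc).mono Set.inter_subset_right)
      fun z hz => tendsto_cauchyT h (hc.trans_le hz.2)
  filter_upwards [Metric.tendstoUniformlyOn_iff.mp hnear ε hε] with n hn z hz
  by_cases hzR : ‖z‖ ≤ R
  · exact hn z ⟨mem_closedBall_zero_iff.mpr hzR, hz⟩
  · have hμ := hR μ (Set.mem_insert _ _) z hz (le_of_not_ge hzR)
    have hμn := hR (μs n) (Set.mem_insert_of_mem _ ⟨n, rfl⟩) z hz (le_of_not_ge hzR)
    calc dist (cauchyT μ z) (cauchyT (μs n) z) ≤ ‖cauchyT μ z‖ + ‖cauchyT (μs n) z‖ :=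
          dist_le_norm_add_norm _ _
      _ < ε := by linarith

theorem cauchy_uniform_convergence_general (μs : ℕ → Measure ℝ) (μ : Measure ℝ)
    [IsProbabilityMeasure μ] [∀ n, IsProbabilityMeasure (μs n)]
    (hweak : ∀ f : BoundedContinuousFunction ℝ ℝ,
      Filter.Tendsto (fun n => ∫ x, f x ∂(μs n)) Filter.atTop
        (nhds (∫ x, f x ∂μ))) :
    ∀ ε : ℝ, 0 < ε → ∃ N : ℕ, ∀ n ≥ N, ∀ z : ℂ, 1 ≤ z.im →
      ‖cauchyT (μs n) z - cauchyT μ z‖ < ε := by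
  intro ε hε
  let Pμs : ℕ → ProbabilityMeasure ℝ := fun n => ⟨μs n, inferInstance⟩
  let Pμ : ProbabilityMeasure ℝ := ⟨μ, inferInstance⟩
  have hP : Tendsto Pμs atTop (𝓝 Pμ) :=
    ProbabilityMeasure.tendsto_iff_forall_integral_tendsto.mpr hweak
  obtain ⟨N, hN⟩ := eventually_atTop.mp
    (Metric.tendstoUniformlyOn_iff.mp (tendstoUniformlyOn_cauchyT hP one_pos) ε hε)
  exact ⟨N, fun n hn z hz => by rw [← dist_eq_norm, dist_comm]; exact hN n hn z hz⟩

/-- if a sequence of symmetric probability measures `μ_n` converges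
weakly to a symmetric probability measure `μ`, then the Cauchy transforms
`G_{μ_n}` converge to `G_μ` uniformly on `{z : Im z ≥ 1}`. -/
theorem cauchy_uniform_convergence (μs : ℕ → Measure ℝ) (μ : Measure ℝ)
    [IsProbabilityMeasure μ] [∀ n, IsProbabilityMeasure (μs n)]
    (hsym : ∀ n, IsSymmetricMeasure (μs n)) (hμsym : IsSymmetricMeasure μ)
    (hweak : ∀ f : BoundedContinuousFunction ℝ ℝ,
      Filter.Tendsto (fun n => ∫ x, f x ∂(μs n)) Filter.atTop
        (nhds (∫ x, f x ∂μ))) :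
    ∀ ε : ℝ, 0 < ε → ∃ N : ℕ, ∀ n ≥ N, ∀ z : ℂ, 1 ≤ z.im →
      ‖cauchyT (μs n) z - cauchyT μ z‖ < ε :=
  cauchy_uniform_convergence_general μs μ hweak
end
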